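/- The initial pawn annihilation and creation operators are adjoint with respect to the pairing: for all words x and y, ⟨a_{p,0} x | y⟩ = ⟨x | a_{p,0}* y⟩. Explicitly: if x = true :: x′ then ⟨x′ | y⟩ = ⟨x | true :: y⟩, while if x begins with false or is empty then ⟨x | true :: y⟩ = 0. -/
import Mathlib


/-- A single pawn move: a pawn (`true`) advances one square rightward into an
empty square (`false`). -/
def PawnMove (w₀ w₁ : List Bool) : Prop :=
  ∃ u v : List Bool, w₀ = u ++ [true, false] ++ v ∧ w₁ = u ++ [false, true] ++ v

/-- Reachability: the reflexive-transitive closure of the single-move relation. -/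
def Reach : List Bool → List Bool → Prop :=
  Relation.ReflTransGen PawnMove

/-- The `ZMod 2` pairing `⟨w₀|w₁⟩`: `1` if `w₁` is reachable from `w₀`, else `0`. -/
noncomputable def pairing (w₀ w₁ : List Bool) : ZMod 2 :=
  open Classical in if Reach w₀ w₁ then 1 else 0

theorem pawnMove_cons (c : Bool) {a b : List Bool} (h : PawnMove a b) :
    PawnMove (c :: a) (c :: b) := by
  obtain ⟨u, v, h0, h1⟩ := h
  exact ⟨c :: u, v, by simp [h0], by simp [h1]⟩

theorem reach_cons (c : Bool) {a b : List Bool} (h : Reach a b) :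
    Reach (c :: a) (c :: b) := by
  induction h with
  | refl => exact Relation.ReflTransGen.refl
  | tail _ hm ih => exact ih.tail (pawnMove_cons c hm)

theorem reach_to_cons_true {w b : List Bool} (h : Reach w (true :: b)) :
    ∃ a, w = true :: a ∧ Reach a b := by
  induction h using Relation.ReflTransGen.head_induction_on with
  | refl => exact ⟨b, rfl, Relation.ReflTransGen.refl⟩
  | head hm _ ih =>
    obtain ⟨a, ha, hr⟩ := ih
    obtain ⟨u, v, h0, h1⟩ := hm
    match u, h1.symm.trans ha with
    | true :: u', h1' =>
      refine ⟨u' ++ [true, false] ++ v, by simpa using h0, ?_⟩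
      refine Relation.ReflTransGen.head ⟨u', v, rfl, rfl⟩ ?_
      have : a = u' ++ [false, true] ++ v := by simpa using h1'.symm
      rw [← this]; exact hr

/-- Initial pawn annihilation and creation are adjoint:
`⟨a_{p,0} x | y⟩ = ⟨x | a_{p,0}* y⟩`. If `x = true :: x'` then
`⟨x' | y⟩ = ⟨x | true :: y⟩`; if `x` begins with `false` or is empty then
`⟨x | true :: y⟩ = 0`. -/
theorem initial_pawn_adjoint :
    (∀ x' y : List Bool, pairing x' y = pairing (true :: x') (true :: y)) ∧
    (∀ x y : List Bool, (x = [] ∨ x.head? = some false) →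
      pairing x (true :: y) = 0) := by
  constructor
  · intro x' y
    unfold pairing
    congr 1
    apply propext
    constructor
    · intro h
      exact reach_cons true h
    · intro h
      obtain ⟨a, ha, hr⟩ := reach_to_cons_true h
      cases ha; exact hr
  · intro x y hx
    unfold pairing
    rw [if_neg]
    intro h
    obtain ⟨a, ha, -⟩ := reach_to_cons_true h
    rcases hx with h0 | h0 <;> rw [ha] at h0 <;> simp at h0
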